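/- Fix a time slot t, suppose a(t) ≤ N·L and h(t) ≤ N·η·L, and let (ũ_n(t))_{n=1}^N with 0 ≤ ũ_n(t) ≤ L, together with ṽ(t), s̃(t) ≥ 0, satisfy Σ_n ũ_n(t) + ṽ(t) ≥ a(t) and η·Σ_n ũ_n(t) + s̃(t) ≥ h(t). Define û_n(t) as the bottom-up layering of U(t) := Σ_{r=1}^N ũ_r(t) with cap L (û_1(t) = min{L, U(t)}, û_n(t) = min{L, U(t) − Σ_{r=1}^{n−1} û_r(t)}), and set v̂_n(t) := [a^{ly-n}(t) − û_n(t)]^+ and ŝ_n(t) := [h^{ly-n}(t) − η·û_n(t)]^+. Then Σ_{n=1}^N v̂_n(t) ≤ ṽ(t) and Σ_{n=1}^N ŝ_n(t) ≤ s̃(t). -/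
import Mathlib


/-- Positive part `[x]⁺ = max {x, 0}`. -/
noncomputable def pPart (x : ℝ) : ℝ := max x 0

/-- Cumulative layered demand: `cumLayer C x n = Σ_{r=1}^n min{C, x − (previous sum)}`. -/
noncomputable def cumLayer (C x : ℝ) : ℕ → ℝ
  | 0 => 0
  | n + 1 => cumLayer C x n + min C (x - cumLayer C x n)

/-- The `n`-th layer (for `n ≥ 1`) of demand `x` with cap `C`:
`layerOf C x 1 = min{C, x}` and `layerOf C x n = min{C, x − Σ_{r<n} layerOf C x r}`. -/
noncomputable def layerOf (C x : ℝ) (n : ℕ) : ℝ := min C (x - cumLayer C x (n - 1))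

lemma cumLayer_closed (C x : ℝ) (hC : 0 ≤ C) (hx : 0 ≤ x) :
    ∀ n : ℕ, cumLayer C x n = min x (n * C)
  | 0 => by simp [cumLayer, hx]
  | n + 1 => by
    rw [cumLayer, cumLayer_closed C x hC hx n]
    rcases le_total x (n * C) with h | h
    · rw [min_eq_left h, sub_self, min_eq_right hC, add_zero, min_eq_left]
      push_cast; nlinarith
    · rw [min_eq_right h]
      push_cast
      rcases le_total C (x - n * C) with h2 | h2
      · rw [min_eq_left h2, min_eq_right (by nlinarith)]; ring
      · rw [min_eq_right h2, min_eq_left (by nlinarith)]; ring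

lemma layerOf_closed (C x : ℝ) (hC : 0 ≤ C) (hx : 0 ≤ x) (n : ℕ) :
    layerOf C x n = min C (max (x - (n - 1 : ℕ) * C) 0) := by
  rw [layerOf, cumLayer_closed C x hC hx]
  congr 1
  rcases le_total x ((n - 1 : ℕ) * C) with h | h
  · rw [min_eq_left h, sub_self, max_eq_right (by linarith)]
  · rw [min_eq_right h, max_eq_left (by linarith)]

lemma layerOf_mono (C x y : ℝ) (hC : 0 ≤ C) (hx : 0 ≤ x) (hxy : x ≤ y) (n : ℕ) :
    layerOf C x n ≤ layerOf C y n := by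
  rw [layerOf_closed C x hC hx, layerOf_closed C y hC (hx.trans hxy)]
  exact min_le_min le_rfl (max_le_max (by linarith) le_rfl)

lemma sum_layerOf (C x : ℝ) : ∀ N : ℕ,
    (∑ n ∈ Finset.Icc 1 N, layerOf C x n) = cumLayer C x N
  | 0 => by simp [cumLayer]
  | N + 1 => by
    rw [Finset.sum_Icc_succ_top (by omega), sum_layerOf C x N, cumLayer]
    simp [layerOf]

lemma layerOf_smul (c C x : ℝ) (hc : 0 ≤ c) (n : ℕ) :
    layerOf (c * C) (c * x) n = c * layerOf C x n := by
  suffices h : ∀ m : ℕ, cumLayer (c * C) (c * x) m = c * cumLayer C x m by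
    rw [layerOf, layerOf, h, ← mul_sub, ← mul_min_of_nonneg _ _ hc]
  intro m
  induction m with
  | zero => simp [cumLayer]
  | succ m ih => rw [cumLayer, cumLayer, ih, mul_add, ← mul_sub, mul_min_of_nonneg _ _ hc]

/-- single slot: if `(ũ_n, ṽ, s̃)` is feasible and `û_n` is the
bottom-up layering (cap `L`) of `U = Σ_n ũ_n`, and
`v̂_n = [a^{ly-n} − û_n]⁺`, `ŝ_n = [h^{ly-n} − η·û_n]⁺`, then
`Σ_n v̂_n ≤ ṽ` and `Σ_n ŝ_n ≤ s̃`. -/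
theorem layering_reduces_external_supply
    (N : ℕ) (L η a h vt st : ℝ) (ut : ℕ → ℝ)
    (hL : 0 < L) (hη : 0 < η) (ha0 : 0 ≤ a) (hh0 : 0 ≤ h)
    (haN : a ≤ N * L) (hhN : h ≤ N * (η * L))
    (hu : ∀ n, 1 ≤ n → n ≤ N → 0 ≤ ut n ∧ ut n ≤ L)
    (hv : 0 ≤ vt) (hs : 0 ≤ st)
    (hda : a ≤ (∑ n ∈ Finset.Icc 1 N, ut n) + vt)
    (hdh : h ≤ η * (∑ n ∈ Finset.Icc 1 N, ut n) + st) :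
    (∑ n ∈ Finset.Icc 1 N,
        pPart (layerOf L a n - layerOf L (∑ r ∈ Finset.Icc 1 N, ut r) n)) ≤ vt ∧
    (∑ n ∈ Finset.Icc 1 N,
        pPart (layerOf (η * L) h n - η * layerOf L (∑ r ∈ Finset.Icc 1 N, ut r) n))
      ≤ st := by
  set U := ∑ r ∈ Finset.Icc 1 N, ut r with hUdef
  have hU0 : 0 ≤ U := Finset.sum_nonneg fun n hn =>
    (hu n (Finset.mem_Icc.mp hn).1 (Finset.mem_Icc.mp hn).2).1
  constructor
  · rcases le_total a U with hc | hc
    · have hz : ∀ n ∈ Finset.Icc 1 N, pPart (layerOf L a n - layerOf L U n) = 0 := by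
        intro n _
        have := layerOf_mono L a U hL.le ha0 hc n
        simp only [pPart]
        rw [max_eq_right (by linarith)]
      rw [Finset.sum_congr rfl hz]
      simpa using hv
    · have he : ∀ n ∈ Finset.Icc 1 N,
          pPart (layerOf L a n - layerOf L U n) = layerOf L a n - layerOf L U n := by
        intro n _
        have := layerOf_mono L U a hL.le hU0 hc n
        simp only [pPart]
        rw [max_eq_left (by linarith)]
      rw [Finset.sum_congr rfl he, Finset.sum_sub_distrib, sum_layerOf, sum_layerOf,
        cumLayer_closed L a hL.le ha0, cumLayer_closed L U hL.le hU0,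
        min_eq_left haN, min_eq_left (hc.trans haN)]
      linarith
  · have hrw : ∀ n, η * layerOf L U n = layerOf (η * L) (η * U) n :=
      fun n => (layerOf_smul η L U hη.le n).symm
    have hηU0 : 0 ≤ η * U := by positivity
    rcases le_total h (η * U) with hc | hc
    · have hz : ∀ n ∈ Finset.Icc 1 N,
          pPart (layerOf (η * L) h n - η * layerOf L U n) = 0 := by
        intro n _
        have := layerOf_mono (η * L) h (η * U) (by positivity) hh0 hc n
        rw [hrw]
        simp only [pPart]
        rw [max_eq_right (by linarith)]
      rw [Finset.sum_congr rfl hz]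
      simpa using hs
    · have he : ∀ n ∈ Finset.Icc 1 N,
          pPart (layerOf (η * L) h n - η * layerOf L U n)
            = layerOf (η * L) h n - layerOf (η * L) (η * U) n := by
        intro n _
        have := layerOf_mono (η * L) (η * U) h (by positivity) hηU0 hc n
        rw [hrw]
        simp only [pPart]
        rw [max_eq_left (by linarith)]
      rw [Finset.sum_congr rfl he, Finset.sum_sub_distrib, sum_layerOf, sum_layerOf,
        cumLayer_closed (η * L) h (by positivity) hh0,
        cumLayer_closed (η * L) (η * U) (by positivity) hηU0,
        min_eq_left hhN, min_eq_left (hc.trans hhN)]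
      linarith
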